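/- Let n ≥ 1 be an integer and let λ₁, …, λₙ be compactly supported Borel probability measures on ℝ. Then the n-fold product measure λ' = λ₁ × … × λₙ on ℝ^n satisfies dim_{l^1} λ' ≥ dim_{l^1} λ₁ + … + dim_{l^1} λₙ. -/

import Mathlib

/-!
The Fourier transform of the product measure `λ₁ × ⋯ × λₙ` at `ξ` is `∏ i, λ̂ᵢ(ξᵢ)`, and the
lattice points of the ball of radius `R` lie in the cube `[-R, R]ⁿ`. Hence the `l¹` lattice sum of
the product over the ball is at most the product of the one-dimensional sums over `[-R, R]`, and
bounds `Cᵢ R^(1 - sᵢ)` for the factors multiply to `(∏ Cᵢ) R^(n - ∑ sᵢ)`. Choosing each `sᵢ`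
within `ε / (n + 1)` of `dim_{l¹} λᵢ` (or `sᵢ = 0`, which is always admissible) gives the claim.
-/

open MeasureTheory Metric Set
open scoped ENNReal NNReal

noncomputable section

/-- The Fourier transform of a measure on `ℝⁿ`. -/
def mFT {n : ℕ} (μ : Measure (EuclideanSpace ℝ (Fin n))) (ξ : EuclideanSpace ℝ (Fin n)) : ℂ :=
  ∫ x, Complex.exp (((-2 * Real.pi * (inner ℝ x ξ : ℝ) : ℝ) : ℂ) * Complex.I) ∂μ

/-- An integer lattice point of `ℤⁿ`, regarded as a point of `ℝⁿ`. -/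
def lat {n : ℕ} (k : Fin n → ℤ) : EuclideanSpace ℝ (Fin n) := WithLp.toLp 2 (fun i => (k i : ℝ))

/-- The Fourier `l^p` dimension of a measure on `ℝⁿ`. -/
def dimlp {n : ℕ} (p : ℝ) (μ : Measure (EuclideanSpace ℝ (Fin n))) : ℝ :=
  sSup {s : ℝ | 0 < s ∧ ∃ C : ℝ, 0 < C ∧ ∀ R : ℝ, 1 ≤ R →
    ∀ θ : EuclideanSpace ℝ (Fin n), (∀ i, θ i ∈ Set.Icc (0 : ℝ) 1) →
      (∑' k : Fin n → ℤ, if ‖lat k‖ ≤ R then ‖mFT μ (lat k + θ)‖ ^ p else 0)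
        ≤ C * R ^ ((n : ℝ) - s)}

/-- The (topological) support of a measure. -/
def msupp {X : Type*} [TopologicalSpace X] [MeasurableSpace X] (μ : Measure X) : Set X :=
  {x | ∀ U : Set X, IsOpen U → x ∈ U → 0 < μ U}

/-- The lower Hausdorff dimension of a measure. -/
def muDimH {X : Type*} [EMetricSpace X] [MeasurableSpace X] (μ : Measure X) : ℝ≥0∞ :=
  ⨅ (A : Set X) (_ : MeasurableSet A) (_ : 0 < μ A), dimH A

/-- The surface measure on the unit sphere `S^{n-1}`, as the `(n-1)`-dimensional
Hausdorff measure restricted to the sphere. -/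
def sphMeasure (n : ℕ) : Measure (EuclideanSpace ℝ (Fin n)) :=
  (μH[((n : ℝ) - 1)]).restrict (sphere (0 : EuclideanSpace ℝ (Fin n)) 1)

/-- The radial projection centred at `x`. -/
def radProj {n : ℕ} (x y : EuclideanSpace ℝ (Fin n)) : EuclideanSpace ℝ (Fin n) :=
  ‖y - x‖⁻¹ • (y - x)

/-- Identify `ℝ × ℝ` with the Euclidean plane. -/
def toE2 (q : ℝ × ℝ) : EuclideanSpace ℝ (Fin 2) := WithLp.toLp 2 ![q.1, q.2]

/-- The Fourier transform of a measure on `ℝ`. -/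
def mFTR (μ : Measure ℝ) (ξ : ℝ) : ℂ :=
  ∫ x, Complex.exp (((-2 * Real.pi * (x * ξ) : ℝ) : ℂ) * Complex.I) ∂μ

/-- The Fourier `l^p` dimension of a measure on `ℝ`. -/
def dimlpR (p : ℝ) (μ : Measure ℝ) : ℝ :=
  sSup {s : ℝ | 0 < s ∧ ∃ C : ℝ, 0 < C ∧ ∀ R : ℝ, 1 ≤ R → ∀ θ ∈ Set.Icc (0 : ℝ) 1,
    (∑' k : ℤ, if |(k : ℝ)| ≤ R then ‖mFTR μ ((k : ℝ) + θ)‖ ^ p else 0) ≤ C * R ^ (1 - s)}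

open scoped Finset

lemma mem_Icc_neg_ceil_ceil {R : ℝ} {m : ℤ} (h : |(m : ℝ)| ≤ R) :
    m ∈ Finset.Icc (-⌈R⌉) ⌈R⌉ := by
  rw [abs_le] at h
  rw [Finset.mem_Icc, ← Int.cast_le (R := ℝ), ← Int.cast_le (R := ℝ), Int.cast_neg]
  constructor <;> linarith [Int.le_ceil R]

lemma card_Icc_neg_ceil_ceil_le {R : ℝ} (hR : 1 ≤ R) :
    (#(Finset.Icc (-⌈R⌉) ⌈R⌉) : ℝ) ≤ 5 * R := by
  have hceil : (⌈R⌉ : ℝ) < R + 1 := Int.ceil_lt_add_one R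
  have hpos : (0 : ℤ) ≤ ⌈R⌉ := Int.ceil_nonneg (by linarith)
  rw [Int.card_Icc, show ⌈R⌉ + 1 - -⌈R⌉ = 2 * ⌈R⌉ + 1 by ring,
    ← Int.cast_natCast, Int.toNat_of_nonneg (by omega)]
  push_cast
  linarith

@[simp]
lemma lat_zero {n : ℕ} : lat (0 : Fin n → ℤ) = 0 := by
  ext; simp [lat]

lemma abs_le_norm_lat {n : ℕ} (k : Fin n → ℤ) (i : Fin n) : |(k i : ℝ)| ≤ ‖lat k‖ :=
  PiLp.norm_apply_le (lat k) i

lemma mem_piFinset_of_norm_lat_le {n : ℕ} {R : ℝ} {k : Fin n → ℤ} (h : ‖lat k‖ ≤ R) :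
    k ∈ Fintype.piFinset fun _ => Finset.Icc (-⌈R⌉) ⌈R⌉ :=
  Fintype.mem_piFinset.2 fun i => mem_Icc_neg_ceil_ceil ((abs_le_norm_lat k i).trans h)

lemma tsum_ite_abs_le_eq_sum (R : ℝ) (f : ℤ → ℝ) :
    ∑' m : ℤ, (if |(m : ℝ)| ≤ R then f m else 0) =
      ∑ m ∈ Finset.Icc (-⌈R⌉) ⌈R⌉, if |(m : ℝ)| ≤ R then f m else 0 :=
  tsum_eq_sum fun _ hm => if_neg (mt mem_Icc_neg_ceil_ceil hm)

lemma tsum_ite_norm_lat_le_eq_sum {n : ℕ} (R : ℝ) (F : (Fin n → ℤ) → ℝ) :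
    ∑' k : Fin n → ℤ, (if ‖lat k‖ ≤ R then F k else 0) =
      ∑ k ∈ Fintype.piFinset (fun _ => Finset.Icc (-⌈R⌉) ⌈R⌉),
        if ‖lat k‖ ≤ R then F k else 0 :=
  tsum_eq_sum fun _ hk => if_neg (mt mem_piFinset_of_norm_lat_le hk)

/-- The lattice points of the ball of radius `R` lie in the cube `[-R, R]ⁿ`. -/
lemma tsum_ite_norm_lat_le_le_prod {n : ℕ} (R : ℝ) (F : (Fin n → ℤ) → ℝ) (f : Fin n → ℤ → ℝ)
    (hf : ∀ i m, 0 ≤ f i m) (hF : ∀ k, F k ≤ ∏ i, f i (k i)) :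
    ∑' k : Fin n → ℤ, (if ‖lat k‖ ≤ R then F k else 0) ≤
      ∏ i, ∑' m : ℤ, (if |(m : ℝ)| ≤ R then f i m else 0) := by
  simp_rw [tsum_ite_norm_lat_le_eq_sum, tsum_ite_abs_le_eq_sum, Finset.prod_univ_sum]
  refine Finset.sum_le_sum fun k _ => ?_
  split_ifs with hk
  · refine (hF k).trans (Finset.prod_le_prod (fun i _ => hf i _) fun i _ => ?_)
    rw [if_pos ((abs_le_norm_lat k i).trans hk)]
  · exact Finset.prod_nonneg fun i _ => by split_ifs <;> simp [hf]

lemma nonneg_of_forall_one_le_mul_rpow {C a : ℝ} (h : ∀ R : ℝ, 1 ≤ R → 1 ≤ C * R ^ a) :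
    0 ≤ a := by
  by_contra! ha
  have hlim : Filter.Tendsto (fun R : ℝ => C * R ^ a) Filter.atTop (nhds 0) := by
    simpa using (tendsto_rpow_neg_atTop (neg_pos.2 ha)).const_mul C
  obtain ⟨R, hlt, hR⟩ :=
    ((hlim.eventually_lt_const one_pos).and (Filter.eventually_ge_atTop 1)).exists
  linarith [h R hR]

lemma norm_mFTR_le_one (μ : Measure ℝ) [IsProbabilityMeasure μ] (ξ : ℝ) : ‖mFTR μ ξ‖ ≤ 1 := by
  simpa [mFTR] using norm_integral_le_of_norm_le_const (μ := μ) (C := 1) <|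
    Filter.Eventually.of_forall fun x => (Complex.norm_exp_ofReal_mul_I (-2 * Real.pi * (x * ξ))).le

lemma mFT_zero {n : ℕ} (μ : Measure (EuclideanSpace ℝ (Fin n))) [IsProbabilityMeasure μ] :
    mFT μ 0 = 1 := by
  simp [mFT]

lemma mFT_map_toLp_pi {n : ℕ} (μs : Fin n → Measure ℝ) [∀ i, SigmaFinite (μs i)]
    (ξ : EuclideanSpace ℝ (Fin n)) :
    mFT (Measure.map (fun x : Fin n → ℝ => (WithLp.toLp 2 x : EuclideanSpace ℝ (Fin n)))
      (Measure.pi μs)) ξ = ∏ i, mFTR (μs i) (ξ i) := by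
  have hcont : Continuous fun x : EuclideanSpace ℝ (Fin n) =>
      Complex.exp (((-2 * Real.pi * (inner ℝ x ξ : ℝ) : ℝ) : ℂ) * Complex.I) := by
    fun_prop
  rw [mFT, integral_map (WithLp.measurable_toLp 2 _).aemeasurable hcont.aestronglyMeasurable]
  simp_rw [mFTR, ← integral_fin_nat_prod_eq_prod, ← Complex.exp_sum, ← Finset.sum_mul]
  congr! 4
  simp only [PiLp.inner_apply, RCLike.inner_apply, conj_trivial]
  push_cast
  rw [Finset.mul_sum]
  simp only [mul_comm]

def HasFourierLpDecayR (p : ℝ) (μ : Measure ℝ) (s : ℝ) : Prop :=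
  ∃ C : ℝ, 0 < C ∧ ∀ R : ℝ, 1 ≤ R → ∀ θ ∈ Set.Icc (0 : ℝ) 1,
    (∑' k : ℤ, if |(k : ℝ)| ≤ R then ‖mFTR μ ((k : ℝ) + θ)‖ ^ p else 0) ≤ C * R ^ (1 - s)

def HasFourierLpDecay {n : ℕ} (p : ℝ) (μ : Measure (EuclideanSpace ℝ (Fin n))) (s : ℝ) : Prop :=
  ∃ C : ℝ, 0 < C ∧ ∀ R : ℝ, 1 ≤ R →
    ∀ θ : EuclideanSpace ℝ (Fin n), (∀ i, θ i ∈ Set.Icc (0 : ℝ) 1) →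
      (∑' k : Fin n → ℤ, if ‖lat k‖ ≤ R then ‖mFT μ (lat k + θ)‖ ^ p else 0)
        ≤ C * R ^ ((n : ℝ) - s)

lemma dimlpR_eq_sSup (p : ℝ) (μ : Measure ℝ) :
    dimlpR p μ = sSup {s | 0 < s ∧ HasFourierLpDecayR p μ s} := rfl

lemma dimlp_eq_sSup {n : ℕ} (p : ℝ) (μ : Measure (EuclideanSpace ℝ (Fin n))) :
    dimlp p μ = sSup {s | 0 < s ∧ HasFourierLpDecay p μ s} := rfl

lemma hasFourierLpDecayR_zero (μ : Measure ℝ) [IsProbabilityMeasure μ] {p : ℝ} (hp : 0 ≤ p) :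
    HasFourierLpDecayR p μ 0 := by
  refine ⟨5, by norm_num, fun R hR θ _ => ?_⟩
  rw [tsum_ite_abs_le_eq_sum, sub_zero, Real.rpow_one]
  calc _ ≤ ∑ _m ∈ Finset.Icc (-⌈R⌉) ⌈R⌉, (1 : ℝ) := by
        refine Finset.sum_le_sum fun m _ => ?_
        split_ifs
        · exact Real.rpow_le_one (norm_nonneg _) (norm_mFTR_le_one μ _) hp
        · exact zero_le_one
    _ ≤ 5 * R := by simpa using card_Icc_neg_ceil_ceil_le hR

lemma exists_hasFourierLpDecayR_dimlpR_le (μ : Measure ℝ) [IsProbabilityMeasure μ] {p : ℝ}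
    (hp : 0 ≤ p) {ε : ℝ} (hε : 0 < ε) :
    ∃ s, 0 ≤ s ∧ dimlpR p μ ≤ s + ε ∧ HasFourierLpDecayR p μ s := by
  rcases Set.eq_empty_or_nonempty {s | 0 < s ∧ HasFourierLpDecayR p μ s} with hempty | hne
  · refine ⟨0, le_rfl, ?_, hasFourierLpDecayR_zero μ hp⟩
    rw [dimlpR_eq_sSup, hempty, Real.sSup_empty]
    linarith
  · obtain ⟨s, ⟨hs, hdecay⟩, hlt⟩ := exists_lt_of_lt_csSup hne (sub_lt_self _ hε)
    exact ⟨s, hs.le, by rw [dimlpR_eq_sSup]; linarith, hdecay⟩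

/-- Testing the decay bound at the frequency `0`, where `mFT μ = 1`, caps the exponent at `n`. -/
lemma HasFourierLpDecay.le_dim {n : ℕ} {p : ℝ} {μ : Measure (EuclideanSpace ℝ (Fin n))}
    [IsProbabilityMeasure μ] {s : ℝ} (h : HasFourierLpDecay p μ s) : s ≤ n := by
  obtain ⟨C, -, hC⟩ := h
  suffices 0 ≤ (n : ℝ) - s by linarith
  refine nonneg_of_forall_one_le_mul_rpow fun R hR => (le_trans ?_ (hC R hR 0 fun i => by simp))
  rw [tsum_ite_norm_lat_le_eq_sum]
  have h0 : (0 : Fin n → ℤ) ∈ Fintype.piFinset fun _ => Finset.Icc (-⌈R⌉) ⌈R⌉ :=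
    mem_piFinset_of_norm_lat_le (by simp; linarith)
  refine le_of_eq_of_le ?_ (Finset.single_le_sum (fun k _ => ?_) h0)
  · simp [mFT_zero, show (0 : ℝ) ≤ R by linarith]
  · split_ifs <;> positivity

lemma HasFourierLpDecay.le_dimlp {n : ℕ} {p : ℝ} {μ : Measure (EuclideanSpace ℝ (Fin n))}
    [IsProbabilityMeasure μ] {s : ℝ} (hs : 0 ≤ s) (h : HasFourierLpDecay p μ s) :
    s ≤ dimlp p μ := by
  rw [dimlp_eq_sSup]
  rcases hs.eq_or_lt with rfl | hs
  · exact Real.sSup_nonneg fun _ hx => hx.1.le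
  · exact le_csSup ⟨n, fun _ hx => hx.2.le_dim⟩ ⟨hs, h⟩

lemma HasFourierLpDecayR.pi {n : ℕ} {p : ℝ} {μs : Fin n → Measure ℝ} [∀ i, SigmaFinite (μs i)]
    {s : Fin n → ℝ} (h : ∀ i, HasFourierLpDecayR p (μs i) (s i)) :
    HasFourierLpDecay p
      (Measure.map (fun x : Fin n → ℝ => (WithLp.toLp 2 x : EuclideanSpace ℝ (Fin n)))
        (Measure.pi μs)) (∑ i, s i) := by
  choose C hC hbound using h
  refine ⟨∏ i, C i, Finset.prod_pos fun i _ => hC i, fun R hR θ hθ => ?_⟩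
  calc _ ≤ ∏ i, ∑' m : ℤ, (if |(m : ℝ)| ≤ R then ‖mFTR (μs i) ((m : ℝ) + θ i)‖ ^ p else 0) := by
        refine tsum_ite_norm_lat_le_le_prod R _ _ (fun i m => by positivity) fun k => ?_
        rw [mFT_map_toLp_pi, norm_prod, ← Real.finsetProd_rpow _ _ fun i _ => norm_nonneg _]
        rfl
    _ ≤ ∏ i, C i * R ^ (1 - s i) := Finset.prod_le_prod
        (fun i _ => tsum_nonneg fun m => by split_ifs <;> positivity)
        fun i _ => hbound i R hR (θ i) (hθ i)
    _ = (∏ i, C i) * R ^ ((n : ℝ) - ∑ i, s i) := by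
        rw [Finset.prod_mul_distrib, ← Real.rpow_sum_of_pos (by linarith), Finset.sum_sub_distrib]
        simp

theorem stmt12_general {n : ℕ} (μs : Fin n → Measure ℝ)
    (hprob : ∀ i, IsProbabilityMeasure (μs i)) :
    ∑ i, dimlpR 1 (μs i) ≤
      dimlp 1 (Measure.map (fun x : Fin n → ℝ => (WithLp.toLp 2 x : EuclideanSpace ℝ (Fin n)))
        (Measure.pi μs)) := by
  refine le_of_forall_pos_le_add fun ε hε => ?_
  have hδ : 0 < ε / (n + 1) := by positivity
  choose s hs hdim hdecay using
    fun i => exists_hasFourierLpDecayR_dimlpR_le (μs i) zero_le_one hδ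
  have : IsProbabilityMeasure (Measure.map
      (fun x : Fin n → ℝ => (WithLp.toLp 2 x : EuclideanSpace ℝ (Fin n))) (Measure.pi μs)) :=
    Measure.isProbabilityMeasure_map (WithLp.measurable_toLp 2 _).aemeasurable
  calc ∑ i, dimlpR 1 (μs i) ≤ ∑ i, (s i + ε / (n + 1)) := Finset.sum_le_sum fun i _ => hdim i
    _ ≤ (∑ i, s i) + ε := by
        rw [Finset.sum_add_distrib, Finset.sum_const, Finset.card_univ, Fintype.card_fin,
          nsmul_eq_mul, mul_div_assoc']
        gcongr
        rw [div_le_iff₀ (by positivity)]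
        linarith
    _ ≤ _ := by
        gcongr
        exact (HasFourierLpDecayR.pi hdecay).le_dimlp (Finset.sum_nonneg fun i _ => hs i)

/-- For compactly supported Borel probability measures `λ₁, …, λₙ` on `ℝ`,
the product measure `λ' = λ₁ × … × λₙ` on `ℝⁿ` satisfies
`dim_{l¹} λ' ≥ dim_{l¹} λ₁ + … + dim_{l¹} λₙ`. -/
theorem stmt12 {n : ℕ} (hn : 1 ≤ n) (μs : Fin n → Measure ℝ)
    (hprob : ∀ i, IsProbabilityMeasure (μs i))
    (hcomp : ∀ i, ∃ K, IsCompact K ∧ μs i Kᶜ = 0) :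
    ∑ i, dimlpR 1 (μs i) ≤
      dimlp 1 (Measure.map (fun x : Fin n → ℝ => (WithLp.toLp 2 x : EuclideanSpace ℝ (Fin n)))
        (Measure.pi μs)) :=
  stmt12_general μs hprob
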